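/- arXiv:2602.05850 — 2 statements merged into one kernel-verified Lean document; each statement's English description precedes it below -/
import Mathlib

section
/- For each natural number m, the assignment n ↦ {isomorphism classes of n-input m-output Σ-labelled posets}, with the action of a relation R ⊆ [n]×[n'] given by replacing each order relation i ≤ e (from input i) by i' ≤ e for all (i,i') ∈ R and re-closing transitively, defines a functor from FinRel to Set. -/
/-! `n`-input `m`-output `Σ`-labelled posets:
a finite set `V` of elements labelled by `Σ`, and a partial order on
`[n] ⊎ V ⊎ [m]` in which the `n` inputs are minimal and the `m` outputs are
maximal, considered up to label- and order-preserving isomorphism. -/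

/-- Raw data of an `n`-input `m`-output `L`-labelled poset. -/
structure LP (L : Type) (n m : ℕ) where
  V : Type
  le : (Fin n ⊕ V ⊕ Fin m) → (Fin n ⊕ V ⊕ Fin m) → Prop
  label : V → L

/-- Well-formedness: `V` is finite, `le` is a partial order, the inputs are
minimal and the outputs are maximal. -/
def LP.WF {L : Type} {n m : ℕ} (P : LP L n m) : Prop :=
  Finite P.V ∧
  (∀ x, P.le x x) ∧
  (∀ {x y z}, P.le x y → P.le y z → P.le x z) ∧
  (∀ {x y}, P.le x y → P.le y x → x = y) ∧
  (∀ x i, P.le x (.inl i) → x = .inl i) ∧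
  (∀ o y, P.le (.inr (.inr o)) y → y = .inr (.inr o))

/-- Extend a bijection on labelled elements to the whole carrier. -/
def LP.mapEl {V W : Type} {n m : ℕ} (f : V → W) :
    (Fin n ⊕ V ⊕ Fin m) → (Fin n ⊕ W ⊕ Fin m) :=
  Sum.map id (Sum.map f id)

/-- Isomorphism of labelled posets: a label-preserving bijection on the
labelled elements which, extended by the identity on inputs and outputs,
preserves and reflects the order. -/
def LP.Iso {L : Type} {n m : ℕ} (P Q : LP L n m) : Prop :=
  ∃ f : P.V ≃ Q.V,
    (∀ v, Q.label (f v) = P.label v) ∧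
    (∀ x y, P.le x y ↔ Q.le (LP.mapEl f x) (LP.mapEl f y))

def relComp {n m k : ℕ} (R : Set (Fin n × Fin m)) (S : Set (Fin m × Fin k)) :
    Set (Fin n × Fin k) :=
  {p | ∃ b, (p.1, b) ∈ R ∧ (b, p.2) ∈ S}

def relId (n : ℕ) : Set (Fin n × Fin n) := {p | p.1 = p.2}

/-- The action of a relation `R ⊆ [n] × [n']` on a labelled poset: each order
relation `i ≤ e` from an input `i` is replaced by `i' ≤ e` for all
`(i,i') ∈ R` (re-closing transitively, which is automatic as inputs are
minimal). -/
def LP.act {L : Type} {n n' m : ℕ} (R : Set (Fin n × Fin n')) (P : LP L n m) :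
    LP L n' m where
  V := P.V
  le x y :=
    match x, y with
    | .inl i, .inl j => i = j
    | .inl i, .inr e => ∃ i₀, (i₀, i) ∈ R ∧ P.le (.inl i₀) (.inr e)
    | .inr _, .inl _ => False
    | .inr e, .inr e' => P.le (.inr e) (.inr e')
  label := P.label

/-!
Relations act only on the order relations leaving an input; the order among labelled elements
and outputs is untouched. Since inputs are minimal, no new relation `e ≤ i'` is ever created and
the transitive closure adds nothing, so the action preserves well-formedness, commutes with any
isomorphism (which fixes inputs), and the functor laws reduce to the identity and associativity
of relational composition, witnessed by the identity bijection on the labelled elements.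
-/

namespace LP

variable {L : Type} {n n' n'' m : ℕ}

theorem iso_of_le_iff {V : Type} {le le' : Fin n ⊕ V ⊕ Fin m → Fin n ⊕ V ⊕ Fin m → Prop}
    {label : V → L} (h : ∀ x y, le x y ↔ le' x y) :
    (⟨V, le, label⟩ : LP L n m).Iso ⟨V, le', label⟩ :=
  ⟨Equiv.refl V, fun _ => rfl, by simpa only [mapEl, Equiv.coe_refl, Sum.map_id_id, id] using h⟩

theorem WF.act {P : LP L n m} (hP : P.WF) (R : Set (Fin n × Fin n')) : (P.act R).WF := by
  obtain ⟨hfin, hrefl, htrans, hanti, hmin, hmax⟩ := hP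
  refine ⟨hfin, ?refl, ?trans, ?antisymm, ?inputs_minimal, ?outputs_maximal⟩
  case refl =>
    rintro (i | e)
    · rfl
    · exact hrefl _
  case trans =>
    rintro (i | e) (j | e') (k | e'') hxy hyz <;> try exact hxy.elim
    · exact hxy.trans hyz
    · cases hxy; exact hyz
    · exact hyz.elim
    · obtain ⟨i₀, hR, hle⟩ := hxy
      exact ⟨i₀, hR, htrans hle hyz⟩
    · exact hyz.elim
    · exact htrans hxy hyz
  case antisymm =>
    rintro (i | e) (j | e') hxy hyx
    · exact congrArg _ hxy
    · exact hyx.elim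
    · exact hxy.elim
    · exact congrArg _ (Sum.inr_injective (hanti hxy hyx))
  case inputs_minimal =>
    rintro (j | e) i h
    · cases h; rfl
    · exact h.elim
  case outputs_maximal =>
    rintro o (j | e') h
    · exact h.elim
    · exact congrArg _ (Sum.inr_injective (hmax o _ h))

theorem Iso.act {P Q : LP L n m} (h : P.Iso Q) (R : Set (Fin n × Fin n')) :
    (P.act R).Iso (Q.act R) := by
  obtain ⟨f, hlabel, hle⟩ := h
  refine ⟨f, hlabel, ?_⟩
  rintro (i | e) (j | e')
  · exact Iff.rfl
  · exact exists_congr fun i₀ => and_congr_right fun _ => hle _ _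
  · exact Iff.rfl
  · exact hle _ _

theorem act_relId_iso {P : LP L n m} (hP : P.WF) : (P.act (relId n)).Iso P := by
  obtain ⟨-, hrefl, -, -, hmin, -⟩ := hP
  refine iso_of_le_iff fun x y => ?_
  rcases x with i | e <;> rcases y with j | e'
  · exact ⟨fun h => h ▸ hrefl _, fun h => Sum.inl_injective (hmin _ j h)⟩
  · exact ⟨fun ⟨i₀, h, hle⟩ => (show i₀ = i from h) ▸ hle, fun h => ⟨i, rfl, h⟩⟩
  · exact ⟨False.elim, fun h => by cases hmin _ j h⟩
  · exact Iff.rfl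

theorem act_relComp_iso (P : LP L n m) (R : Set (Fin n × Fin n'))
    (S : Set (Fin n' × Fin n'')) : (P.act (relComp R S)).Iso ((P.act R).act S) := by
  refine iso_of_le_iff fun x y => ?_
  rcases x with i | e <;> rcases y with j | e'
  · exact Iff.rfl
  · exact ⟨fun ⟨i₀, ⟨b, hR, hS⟩, hle⟩ => ⟨b, hS, i₀, hR, hle⟩,
      fun ⟨b, hS, i₀, hR, hle⟩ => ⟨i₀, ⟨b, hR, hS⟩, hle⟩⟩
  · exact Iff.rfl
  · exact Iff.rfl

end LP

/-- for each `m`, the assignment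
`n ↦ {isomorphism classes of n-input m-output Σ-labelled posets}`, with the
above action of relations, defines a functor `FinRel → Set`: the action is
well-defined on isomorphism classes of well-formed posets, and satisfies the
identity and composition laws (up to isomorphism, i.e. on isomorphism
classes). -/
theorem lposet_functor_finRel (L : Type) (m : ℕ) :
    (∀ {n n' : ℕ} (P : LP L n m) (R : Set (Fin n × Fin n')),
        P.WF → (P.act R).WF) ∧
    (∀ {n n' : ℕ} (P Q : LP L n m) (R : Set (Fin n × Fin n')),
        P.WF → Q.WF → P.Iso Q → (P.act R).Iso (Q.act R)) ∧
    (∀ {n : ℕ} (P : LP L n m), P.WF → (P.act (relId n)).Iso P) ∧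
    (∀ {n n' n'' : ℕ} (P : LP L n m) (R : Set (Fin n × Fin n'))
        (S : Set (Fin n' × Fin n'')), P.WF →
        (P.act (relComp R S)).Iso ((P.act R).act S)) :=
  ⟨fun _ R hP => hP.act R,
    fun _ _ R _ _ hPQ => hPQ.act R,
    fun _ hP => LP.act_relId_iso hP,
    fun P R S _ => LP.act_relComp_iso P R S⟩
end

section
/- The operation on labelled posets interpreting node_σ satisfies the commutativity axiom: applying node_σ at input n+1 and then node_τ at input n+2 yields the same (n+2)-input labelled poset, up to isomorphism, as applying node_τ at input n+2 and then node_σ at input n+1. -/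
/-- Carrier map for the `node` operation: the fresh vertex stands where the
`k`-th input used to be; the fresh `k`-th input is new. -/
def LP.nodeStrip {L : Type} {n m : ℕ} (P : LP L n m) (k : Fin n) :
    (Fin n ⊕ (P.V ⊕ Unit) ⊕ Fin m) → (Fin n ⊕ P.V ⊕ Fin m)
  | .inl i => .inl i
  | .inr (.inl (.inl v)) => .inr (.inl v)
  | .inr (.inl (.inr _)) => .inl k
  | .inr (.inr o) => .inr (.inr o)

/-- The `node_σ` operation at input position `k`: relabel the `k`-th input as
a new element labelled `σ`, and create a fresh `k`-th input placed
immediately below this new element (closing transitively). -/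
def LP.node {L : Type} {n m : ℕ} (σ : L) (k : Fin n) (P : LP L n m) :
    LP L n m where
  V := P.V ⊕ Unit
  le x y :=
    match x, y with
    | .inl i, .inl j => i = j
    | .inr _, .inl _ => False
    | x, y => P.le (P.nodeStrip k x) (P.nodeStrip k y)
  label := Sum.elim P.label (fun _ => σ)

/-! Composing the two strips sends the `σ`-element to input `k₁` and the `τ`-element to input
`k₂`, whichever node is applied first. In either order, `x ≤ y` holds exactly when the stripped
images are related in `P` and `y` is an input only if `x = y`: for `y` the `τ`-element of the
outer node this needs `k₁ ≠ k₂` and minimality of the inputs of `P`. Hence the bijection exchanging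
the two fresh elements is an isomorphism. -/

namespace LP

variable {L : Type} {n m : ℕ}

def swapFresh (P : LP L n m) (σ τ : L) (k₁ k₂ : Fin n) :
    ((P.node σ k₁).node τ k₂).V ≃ ((P.node τ k₂).node σ k₁).V :=
  (Equiv.sumAssoc P.V Unit Unit).trans <|
    (Equiv.sumCongr (Equiv.refl P.V) (Equiv.sumComm Unit Unit)).trans
      (Equiv.sumAssoc P.V Unit Unit).symm

theorem mapEl_eq_inl_iff {V W : Type} (f : V → W) (x : Fin n ⊕ V ⊕ Fin m) (i : Fin n) :
    mapEl f x = .inl i ↔ x = .inl i := by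
  rcases x with j | v | o <;> simp [mapEl]

theorem mapEl_injective {V W : Type} {f : V → W} (hf : f.Injective) :
    (mapEl f : Fin n ⊕ V ⊕ Fin m → Fin n ⊕ W ⊕ Fin m).Injective :=
  Sum.map_injective.2 ⟨Function.injective_id, Sum.map_injective.2 ⟨hf, Function.injective_id⟩⟩

theorem le_inl_iff (P : LP L n m) (hrefl : ∀ i, P.le (.inl i) (.inl i))
    (hmin : ∀ x i, P.le x (.inl i) → x = .inl i) {x : Fin n ⊕ P.V ⊕ Fin m} {i : Fin n} :
    P.le x (.inl i) ↔ x = .inl i :=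
  ⟨hmin x i, fun h => h ▸ hrefl i⟩

theorem nodeStrip_eq_inl_of_ne (P : LP L n m) {k i : Fin n} (hki : k ≠ i)
    {x : Fin n ⊕ (P.V ⊕ Unit) ⊕ Fin m} (hx : P.nodeStrip k x = .inl i) : x = .inl i := by
  rcases x with j | (v | u) | o <;> simp_all [nodeStrip]

theorem node_le_inl (P : LP L n m) (σ : L) (k : Fin n) (x : Fin n ⊕ (P.node σ k).V ⊕ Fin m)
    (i : Fin n) : (P.node σ k).le x (.inl i) ↔ x = .inl i := by
  rcases x with j | (v | u) | o <;> simp [node]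

theorem node_le_of_forall_ne_inl (P : LP L n m) (σ : L) (k : Fin n)
    (x : Fin n ⊕ (P.node σ k).V ⊕ Fin m) {y : Fin n ⊕ (P.node σ k).V ⊕ Fin m}
    (hy : ∀ i, y ≠ .inl i) :
    (P.node σ k).le x y ↔ P.le (P.nodeStrip k x) (P.nodeStrip k y) := by
  rcases y with i | y
  · exact absurd rfl (hy i)
  · rcases x with j | x <;> rfl

theorem node_node_le_iff (P : LP L n m) (hrefl : ∀ i, P.le (.inl i) (.inl i))
    (hmin : ∀ x i, P.le x (.inl i) → x = .inl i) (σ τ : L) {k₁ k₂ : Fin n} (hk : k₁ ≠ k₂)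
    (x y : Fin n ⊕ ((P.node σ k₁).node τ k₂).V ⊕ Fin m) :
    ((P.node σ k₁).node τ k₂).le x y ↔
      (∀ i, y = .inl i → x = y) ∧
        P.le (P.nodeStrip k₁ ((P.node σ k₁).nodeStrip k₂ x))
          (P.nodeStrip k₁ ((P.node σ k₁).nodeStrip k₂ y)) := by
  by_cases hy : ∃ i, y = .inl i
  · obtain ⟨i, rfl⟩ := hy
    rw [node_le_inl]
    constructor
    · rintro rfl
      exact ⟨fun _ _ => rfl, hrefl i⟩
    · exact fun h => h.1 i rfl
  push Not at hy
  rw [node_le_of_forall_ne_inl _ _ _ _ hy]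
  simp only [hy, IsEmpty.forall_iff, implies_true, true_and]
  by_cases hsy : ∃ i, (P.node σ k₁).nodeStrip k₂ y = .inl i
  · -- `y` is the `τ`-element; as `k₁ ≠ k₂`, only `.inl k₂` itself strips to `.inl k₂` in `P`.
    obtain ⟨i, hi⟩ := hsy
    have hik : i = k₂ := by
      by_contra hne
      exact hy i ((P.node σ k₁).nodeStrip_eq_inl_of_ne (Ne.symm hne) hi)
    subst hik
    rw [hi, node_le_inl]
    exact ((le_inl_iff P hrefl hmin).trans ⟨P.nodeStrip_eq_inl_of_ne hk, congrArg _⟩).symm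
  · push Not at hsy
    exact node_le_of_forall_ne_inl _ _ _ _ hsy

theorem nodeStrip_nodeStrip_mapEl_swapFresh (P : LP L n m) (σ τ : L) (k₁ k₂ : Fin n)
    (x : Fin n ⊕ ((P.node σ k₁).node τ k₂).V ⊕ Fin m) :
    P.nodeStrip k₂ ((P.node τ k₂).nodeStrip k₁ (mapEl (P.swapFresh σ τ k₁ k₂) x)) =
      P.nodeStrip k₁ ((P.node σ k₁).nodeStrip k₂ x) := by
  rcases x with i | ((v | u) | u) | o <;> rfl

end LP

open LP in
/-- the operations interpreting `node` at distinct input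
positions commute with each other, up to isomorphism.  In particular,
applying `node_σ` at input `n+1` and then `node_τ` at input `n+2` yields the
same labelled poset, up to isomorphism, as applying them in the other order;
this corresponds to the axiom
`node_σ(a₁, b₁.node_τ(a₂, b₂.x(b₁,b₂))) = node_τ(a₂, b₂.node_σ(a₁, b₁.x(b₁,b₂)))`. -/
theorem node_comm {L : Type} {n m : ℕ} (σ τ : L) (k₁ k₂ : Fin n)
    (P : LP L n m) (hP : P.WF) (hk : k₁ ≠ k₂) :
    ((P.node σ k₁).node τ k₂).Iso ((P.node τ k₂).node σ k₁) := by
  obtain ⟨-, hrefl, -, -, hmin, -⟩ := hP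
  refine ⟨P.swapFresh σ τ k₁ k₂, by rintro ((v | u) | u) <;> rfl, fun x y => ?_⟩
  rw [node_node_le_iff P (fun i => hrefl _) hmin σ τ hk,
    node_node_le_iff P (fun i => hrefl _) hmin τ σ hk.symm]
  refine and_congr ?_ (iff_of_eq ?_)
  · simp only [mapEl_eq_inl_iff, (mapEl_injective (P.swapFresh σ τ k₁ k₂).injective).eq_iff]
  · exact congrArg₂ P.le (nodeStrip_nodeStrip_mapEl_swapFresh P σ τ k₁ k₂ x).symm
      (nodeStrip_nodeStrip_mapEl_swapFresh P σ τ k₁ k₂ y).symm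
end
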